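/- Deleting the main premise in subsumption demodulation preserves the set of models: for clauses satisfying the side conditions of subsumption demodulation (lσ = t, Cσ ⊆_M D), the sets {l ≃ r ∨ C, L[t] ∨ D} and {l ≃ r ∨ C, L[rσ] ∨ D} are satisfied by exactly the same first-order interpretations. -/

import Mathlib

/-- First-order terms over variables `V` and function symbols `F`. -/
inductive Tm (V F : Type) where
  | var : V → Tm V F
  | fn  : F → List (Tm V F) → Tm V F

/-- Applying a substitution (a map from variables to terms) to a term. -/
def Tm.subst {V F : Type} (σ : V → Tm V F) : Tm V F → Tm V F
  | .var v => σ v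
  | .fn f ts => .fn f (ts.attach.map (fun t => Tm.subst σ t.1))
termination_by t => sizeOf t
decreasing_by
  have := List.sizeOf_lt_of_mem t.2
  simp only [Tm.fn.sizeOf_spec]
  omega

/-- A first-order structure: a domain with interpretations of function and
predicate symbols. -/
structure Str (F P : Type) where
  dom : Type
  Fn : F → List dom → dom
  Pr : P → List dom → Prop

/-- Evaluation of a term in a structure under a variable assignment. -/
def Tm.eval {V F P : Type} (M : Str F P) (ν : V → M.dom) : Tm V F → M.dom
  | .var v => ν v
  | .fn f ts => M.Fn f (ts.attach.map (fun t => Tm.eval M ν t.1))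
termination_by t => sizeOf t
decreasing_by
  have := List.sizeOf_lt_of_mem t.2
  simp only [Tm.fn.sizeOf_spec]
  omega

/-- Literals of first-order logic with equality. -/
inductive Lit (V F P : Type) where
  | pos : P → List (Tm V F) → Lit V F P
  | neg : P → List (Tm V F) → Lit V F P
  | eq  : Tm V F → Tm V F → Lit V F P
  | ne  : Tm V F → Tm V F → Lit V F P

/-- Applying a substitution to a literal. -/
def Lit.subst {V F P : Type} (σ : V → Tm V F) : Lit V F P → Lit V F P
  | .pos p ts => .pos p (ts.map (Tm.subst σ))
  | .neg p ts => .neg p (ts.map (Tm.subst σ))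
  | .eq s t => .eq (s.subst σ) (t.subst σ)
  | .ne s t => .ne (s.subst σ) (t.subst σ)

/-- Satisfaction of a literal under a variable assignment. -/
def Lit.sat {V F P : Type} (M : Str F P) (ν : V → M.dom) : Lit V F P → Prop
  | .pos p ts => M.Pr p (ts.map (Tm.eval M ν))
  | .neg p ts => ¬ M.Pr p (ts.map (Tm.eval M ν))
  | .eq s t => s.eval M ν = t.eval M ν
  | .ne s t => s.eval M ν ≠ t.eval M ν

/-- A clause is a finite multiset of literals. -/
abbrev Clause (V F P : Type) := Multiset (Lit V F P)

/-- A structure satisfies a clause iff it satisfies its universal closure,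
i.e. under every assignment some literal of the clause is true. -/
def Clause.sat {V F P : Type} (M : Str F P) (C : Clause V F P) : Prop :=
  ∀ ν : V → M.dom, ∃ L ∈ C, L.sat M ν

/-- A term context: a term with exactly one hole. -/
inductive Ctx (V F : Type) where
  | hole : Ctx V F
  | fn : F → List (Tm V F) → Ctx V F → List (Tm V F) → Ctx V F

/-- Filling the hole of a term context with a term. -/
def Ctx.fill {V F : Type} : Ctx V F → Tm V F → Tm V F
  | .hole, t => t
  | .fn f pre c post, t => .fn f (pre ++ c.fill t :: post)

/-- A literal context `L[·]`: a literal with a distinguished occurrence of a term. -/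
inductive LCtx (V F P : Type) where
  | pos : P → List (Tm V F) → Ctx V F → List (Tm V F) → LCtx V F P
  | neg : P → List (Tm V F) → Ctx V F → List (Tm V F) → LCtx V F P
  | eqL : Ctx V F → Tm V F → LCtx V F P
  | eqR : Tm V F → Ctx V F → LCtx V F P
  | neL : Ctx V F → Tm V F → LCtx V F P
  | neR : Tm V F → Ctx V F → LCtx V F P

/-- `L.fill t` is the literal `L[t]`. -/
def LCtx.fill {V F P : Type} : LCtx V F P → Tm V F → Lit V F P
  | .pos p pre c post, t => .pos p (pre ++ c.fill t :: post)
  | .neg p pre c post, t => .neg p (pre ++ c.fill t :: post)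
  | .eqL c s, t => .eq (c.fill t) s
  | .eqR s c, t => .eq s (c.fill t)
  | .neL c s, t => .ne (c.fill t) s
  | .neR s c, t => .ne s (c.fill t)

theorem Tm.subst_fn {V F : Type} (σ : V → Tm V F) (f : F) (ts : List (Tm V F)) :
    (Tm.fn f ts).subst σ = .fn f (ts.map (Tm.subst σ)) := by
  rw [Tm.subst]
  congr 1
  simp [List.attach_map_val]

theorem Tm.eval_fn {V F P : Type} (M : Str F P) (ν : V → M.dom) (f : F) (ts : List (Tm V F)) :
    (Tm.fn f ts).eval M ν = M.Fn f (ts.map (Tm.eval M ν)) := by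
  rw [Tm.eval]
  congr 1
  simp [List.attach_map_val]

theorem Tm.eval_subst {V F P : Type} (M : Str F P) (ν : V → M.dom) (σ : V → Tm V F) :
    ∀ u : Tm V F, (u.subst σ).eval M ν = u.eval M (fun v => (σ v).eval M ν)
  | .var v => by rw [Tm.subst, Tm.eval]
  | .fn f ts => by
    rw [Tm.subst_fn, Tm.eval_fn, Tm.eval_fn, List.map_map]
    congr 1
    exact List.map_congr_left (fun x hx => Tm.eval_subst M ν σ x)
termination_by u => sizeOf u
decreasing_by
  have := List.sizeOf_lt_of_mem hx
  simp only [Tm.fn.sizeOf_spec]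
  omega

theorem Ctx.eval_fill {V F P : Type} (M : Str F P) (ν : V → M.dom) (c : Ctx V F)
    {t1 t2 : Tm V F} (h : t1.eval M ν = t2.eval M ν) :
    (c.fill t1).eval M ν = (c.fill t2).eval M ν := by
  induction c with
  | hole => exact h
  | fn f pre c post ih =>
      rw [Ctx.fill, Ctx.fill, Tm.eval_fn, Tm.eval_fn]
      simp [ih]

theorem LCtx.sat_fill {V F P : Type} (M : Str F P) (ν : V → M.dom) (L : LCtx V F P)
    {t1 t2 : Tm V F} (h : t1.eval M ν = t2.eval M ν) :
    (L.fill t1).sat M ν ↔ (L.fill t2).sat M ν := by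
  have key := Ctx.eval_fill M ν (t1 := t1) (t2 := t2)
  cases L <;> simp [LCtx.fill, Lit.sat, key _ h]

theorem Lit.sat_subst {V F P : Type} (M : Str F P) (ν : V → M.dom) (σ : V → Tm V F)
    (L : Lit V F P) : (L.subst σ).sat M ν ↔ L.sat M (fun v => (σ v).eval M ν) := by
  cases L <;> simp [Lit.subst, Lit.sat, List.map_map, Tm.eval_subst,
    Function.comp_def]

theorem sd_key {V F P : Type}
    (σ : V → Tm V F) (l r : Tm V F) (C D : Clause V F P) (L : LCtx V F P)
    (t1 t2 : Tm V F)
    (hsub : C.map (Lit.subst σ) ≤ D) (M : Str F P)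
    (h12 : ∀ ν : V → M.dom,
      l.eval M (fun v => (σ v).eval M ν) = r.eval M (fun v => (σ v).eval M ν) →
      t1.eval M ν = t2.eval M ν)
    (h1 : Clause.sat M (Lit.eq l r ::ₘ C)) (h2 : Clause.sat M (L.fill t1 ::ₘ D)) :
    Clause.sat M (L.fill t2 ::ₘ D) := by
  intro ν
  obtain ⟨K, hK, hKsat⟩ := h1 (fun v => (σ v).eval M ν)
  rw [Multiset.mem_cons] at hK
  rcases hK with rfl | hK
  · -- equality literal true: rewrite
    obtain ⟨K', hK', hK's⟩ := h2 ν
    rw [Multiset.mem_cons] at hK'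
    rcases hK' with rfl | hK'
    · exact ⟨L.fill t2, Multiset.mem_cons_self _ _,
        (LCtx.sat_fill M ν L (h12 ν hKsat)).mp hK's⟩
    · exact ⟨K', Multiset.mem_cons_of_mem hK', hK's⟩
  · -- some literal of C true, so its σ-instance in D is true
    refine ⟨K.subst σ, Multiset.mem_cons_of_mem ?_, ?_⟩
    · exact Multiset.subset_of_le hsub (Multiset.mem_map_of_mem _ hK)
    · exact (Lit.sat_subst M ν σ K).mpr hKsat

/-- Deleting the main premise in subsumption demodulation preserves the set of
models: under the side conditions `lσ = t` and `Cσ ⊆_M D`, the clause sets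
`{l ≃ r ∨ C, L[t] ∨ D}` and `{l ≃ r ∨ C, L[rσ] ∨ D}` have exactly the same
models. -/
theorem subsumption_demodulation_preserves_models {V F P : Type}
    (σ : V → Tm V F) (l r t : Tm V F) (C D : Clause V F P) (L : LCtx V F P)
    (hmatch : l.subst σ = t)
    (hsub : C.map (Lit.subst σ) ≤ D) :
    ∀ M : Str F P,
      (Clause.sat M (Lit.eq l r ::ₘ C) ∧ Clause.sat M (L.fill t ::ₘ D)) ↔
      (Clause.sat M (Lit.eq l r ::ₘ C) ∧ Clause.sat M (L.fill (r.subst σ) ::ₘ D)) := by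
  intro M
  constructor
  · rintro ⟨h1, h2⟩
    refine ⟨h1, sd_key σ l r C D L t (r.subst σ) hsub M ?_ h1 h2⟩
    intro ν heq
    rw [← hmatch, Tm.eval_subst, Tm.eval_subst, heq]
  · rintro ⟨h1, h2⟩
    refine ⟨h1, sd_key σ l r C D L (r.subst σ) t hsub M ?_ h1 h2⟩
    intro ν heq
    rw [← hmatch, Tm.eval_subst, Tm.eval_subst, heq]
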